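/- The Fourier transform of the generalized Airy function of order 4 is the quartic Gaussian: for every λ ∈ ℝ, ∫_ℝ φ(x)·exp(−iλx) dx = exp(−λ⁴/4), where the integral exists because φ is integrable on ℝ. -/

import Mathlib

open MeasureTheory Real Filter

noncomputable def φ (x : ℝ) : ℂ :=
  (1 / (2 * Real.pi)) * ∫ l : ℝ, Complex.exp (Complex.I * l * x - l ^ 4 / 4)

namespace Airy4

open Complex FourierTransform

noncomputable def g (u : ℝ) : ℝ := Real.exp (-(4 * π ^ 4) * u ^ 4)
noncomputable def g1 (u : ℝ) : ℝ := (-(16 * π ^ 4) * u ^ 3) * g u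
noncomputable def g2 (u : ℝ) : ℝ :=
  (-(48 * π ^ 4) * u ^ 2) * g u + (256 * π ^ 8 * u ^ 6) * g u
noncomputable def h (u : ℝ) : ℂ := (g u : ℂ)

lemma c_pos : (0:ℝ) < 4 * π ^ 4 := by positivity

lemma Q (n : ℕ) : Integrable (fun u : ℝ => u ^ n * Real.exp (-(4 * π ^ 4) * u ^ 4)) := by
  have hc := c_pos
  have P : Integrable (fun u : ℝ => u ^ (2*n) * Real.exp (-(4 * π ^ 4) * u ^ 2)) := by
    have := integrable_rpow_mul_exp_neg_mul_sq hc (s := ((2*n : ℕ) : ℝ))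
      (lt_of_lt_of_le (by norm_num) (Nat.cast_nonneg _))
    simpa only [Real.rpow_natCast] using this
  have E : Integrable (fun u : ℝ => Real.exp (-(4 * π ^ 4) * u ^ 2)) :=
    integrable_exp_neg_mul_sq hc
  refine Integrable.mono' ((P.add E).const_mul (Real.exp (4 * π ^ 4))) ?_ ?_
  · exact (((continuous_pow n).mul (Real.continuous_exp.comp (by fun_prop)))).aestronglyMeasurable
  · filter_upwards with u
    have h1 : Real.exp (-(4 * π ^ 4) * u ^ 4)
        ≤ Real.exp (4 * π ^ 4) * Real.exp (-(4 * π ^ 4) * u ^ 2) := by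
      rw [← Real.exp_add]
      apply Real.exp_le_exp.2
      nlinarith [sq_nonneg (u ^ 2 - 1), c_pos]
    have h2 : |u| ^ n ≤ u ^ (2*n) + 1 := by
      have habs : |u| ^ (2*n) = u ^ (2*n) := by
        rw [mul_comm 2 n, pow_mul, pow_mul, ← _root_.abs_pow, _root_.sq_abs]
      rcases le_total (|u|) 1 with hu | hu
      · have h1' : |u| ^ n ≤ 1 := pow_le_one₀ (abs_nonneg u) hu
        have : (0:ℝ) ≤ u ^ (2*n) := by rw [← habs]; positivity
        linarith
      · have : |u| ^ n ≤ |u| ^ (2*n) := pow_le_pow_right₀ hu (by omega)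
        rw [habs] at this; linarith
    have hE : (0:ℝ) < Real.exp (-(4 * π ^ 4) * u ^ 4) := Real.exp_pos _
    calc ‖u ^ n * Real.exp (-(4 * π ^ 4) * u ^ 4)‖
        = |u| ^ n * Real.exp (-(4 * π ^ 4) * u ^ 4) := by
          rw [norm_mul, Real.norm_eq_abs, Real.norm_eq_abs, _root_.abs_pow,
            abs_of_pos hE]
      _ ≤ (u ^ (2*n) + 1) * (Real.exp (4 * π ^ 4) * Real.exp (-(4 * π ^ 4) * u ^ 2)) := by
          have h2n : (0:ℝ) ≤ u ^ (2*n) := (even_two_mul n).pow_nonneg u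
          apply mul_le_mul h2 h1 hE.le
          linarith
      _ = Real.exp (4 * π ^ 4) *
            (u ^ (2*n) * Real.exp (-(4 * π ^ 4) * u ^ 2)
              + Real.exp (-(4 * π ^ 4) * u ^ 2)) := by ring

lemma g_int : Integrable g := by
  have := Q 0
  unfold g
  simpa only [pow_zero, one_mul] using this

lemma g1_int : Integrable g1 := by
  have := (Q 3).const_mul (-(16 * π ^ 4))
  unfold g1 g
  simpa only [mul_assoc] using this

lemma g2_int : Integrable g2 := by
  have h1 := (Q 2).const_mul (-(48 * π ^ 4))
  have h2 := (Q 6).const_mul (256 * π ^ 8)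
  have h3 : Integrable
      (fun u : ℝ => -(48 * π ^ 4) * (u ^ 2 * Real.exp (-(4 * π ^ 4) * u ^ 4))
        + 256 * π ^ 8 * (u ^ 6 * Real.exp (-(4 * π ^ 4) * u ^ 4))) := h1.add h2
  unfold g2 g
  simpa only [mul_assoc] using h3

lemma hasDerivAt_g (u : ℝ) : HasDerivAt g (g1 u) u := by
  have h1 : HasDerivAt (fun u : ℝ => -(4 * π ^ 4) * u ^ 4)
      (-(4 * π ^ 4) * ((4:ℕ) * u ^ (4-1))) u := (hasDerivAt_pow 4 u).const_mul _
  have h2 := h1.exp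
  convert h2 using 1
  · rfl
  simp only [g, g1]
  push_cast
  ring

lemma hasDerivAt_g1 (u : ℝ) : HasDerivAt g1 (g2 u) u := by
  have hp : HasDerivAt (fun u : ℝ => -(16 * π ^ 4) * u ^ 3)
      (-(16 * π ^ 4) * ((3:ℕ) * u ^ (3-1))) u := (hasDerivAt_pow 3 u).const_mul _
  have := hp.mul (hasDerivAt_g u)
  convert this using 1
  · rfl
  · rfl
  · rfl
  simp only [g1, g2]
  push_cast
  ring

lemma deriv_h : deriv h = fun u => ((g1 u : ℝ) : ℂ) :=
  funext fun u => ((hasDerivAt_g u).ofReal_comp).deriv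

lemma deriv_h1 : (deriv fun u => ((g1 u : ℝ) : ℂ)) = fun u => ((g2 u : ℝ) : ℂ) :=
  funext fun u => ((hasDerivAt_g1 u).ofReal_comp).deriv

lemma contDiff_g : ContDiff ℝ 2 g :=
  (Real.contDiff_exp.of_le le_top).comp (by fun_prop)

lemma contDiff_h : ContDiff ℝ 2 h :=
  Complex.ofRealCLM.contDiff.comp contDiff_g

lemma h_int : Integrable h := g_int.ofReal

lemma h_derivs_int : ∀ n : ℕ, (n : ℕ∞) ≤ 2 → Integrable (iteratedDeriv n h) := by
  intro n hn
  have hn' : n ≤ 2 := by exact_mod_cast hn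
  interval_cases n
  · simpa [iteratedDeriv_zero] using h_int
  · rw [iteratedDeriv_one, deriv_h]; exact g1_int.ofReal
  · rw [show (2:ℕ) = 1+1 from rfl, iteratedDeriv_succ, iteratedDeriv_one, deriv_h, deriv_h1]
    exact g2_int.ofReal

lemma fourier_h_bound (w : ℝ) :
    ‖𝓕 h w‖ ≤ ((∫ x, ‖h x‖) + ∫ x, ‖iteratedDeriv 2 h x‖) / (1 + (2*π*w)^2) := by
  set C0 := ∫ x, ‖h x‖ with hC0
  set C2 := ∫ x, ‖iteratedDeriv 2 h x‖ with hC2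
  have b0 : ‖𝓕 h w‖ ≤ C0 :=
    VectorFourier.norm_fourierIntegral_le_integral_norm _ _ _ _ _
  have F2 := Real.fourier_iteratedDeriv (N := 2) (n := 2) contDiff_h h_derivs_int le_rfl
  have b2 : (2*π*w)^2 * ‖𝓕 h w‖ ≤ C2 := by
    have hb : ‖𝓕 (iteratedDeriv 2 h) w‖ ≤ C2 :=
      VectorFourier.norm_fourierIntegral_le_integral_norm _ _ _ _ _
    rw [F2] at hb
    have hz : ‖((2:ℂ) * π * I * w)‖ = 2 * π * |w| := by
      simp [norm_mul, Complex.norm_real, Real.norm_eq_abs, abs_of_pos Real.pi_pos]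
    have : ‖((2:ℂ) * π * I * w) ^ 2 • 𝓕 h w‖ = (2*π*w)^2 * ‖𝓕 h w‖ := by
      rw [norm_smul, norm_pow, hz]
      congr 1
      rw [mul_pow, mul_pow, mul_pow, mul_pow, _root_.sq_abs]
    rwa [this] at hb
  have hpos : (0:ℝ) < 1 + (2*π*w)^2 := by positivity
  rw [le_div_iff₀ hpos]
  nlinarith [b0, b2, norm_nonneg (𝓕 h w)]

lemma fourier_h_int : Integrable (𝓕 h) := by
  have hcont : Continuous (𝓕 h) :=
    VectorFourier.fourierIntegral_continuous Real.continuous_fourierChar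
      continuous_inner h_int
  have hb : Integrable
      (fun w : ℝ => ((∫ x, ‖h x‖) + ∫ x, ‖iteratedDeriv 2 h x‖) / (1 + (2*π*w)^2)) := by
    have : Integrable (fun w : ℝ => (1 + (2*π*w)^2)⁻¹) :=
      integrable_inv_one_add_sq.comp_mul_left' two_pi_pos.ne'
    simpa only [div_eq_mul_inv] using
      this.const_mul ((∫ x, ‖h x‖) + ∫ x, ‖iteratedDeriv 2 h x‖)
  refine hb.mono' hcont.aestronglyMeasurable ?_
  filter_upwards with w
  simpa using fourier_h_bound w

lemma phi_eq : φ = 𝓕⁻ h := by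
  funext x
  rw [Real.fourierInv_eq']
  set F : ℝ → ℂ := fun l => Complex.exp (Complex.I * l * x - l ^ 4 / 4) with hF
  have key : (∫ u : ℝ, F (2 * π * u)) = |(2*π)⁻¹| • ∫ l, F l :=
    Measure.integral_comp_mul_left F (2*π)
  have h2π : (0:ℝ) < 2 * π := two_pi_pos
  rw [abs_of_pos (inv_pos.2 h2π)] at key
  have hint : ∫ l, F l = (2*π : ℝ) • ∫ u : ℝ, F (2 * π * u) := by
    rw [key, smul_smul, mul_inv_cancel₀ h2π.ne', one_smul]
  have hφx : φ x = (1 / (2 * (π:ℝ)) : ℂ) * ∫ l, F l := rfl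
  rw [hφx, hint, real_smul, ← mul_assoc]
  have hone : (1 / (2 * (π:ℝ)) : ℂ) * ((2 * π : ℝ) : ℂ) = 1 := by
    have hπ : ((π:ℝ) : ℂ) ≠ 0 := Complex.ofReal_ne_zero.2 Real.pi_ne_zero
    push_cast
    field_simp
  rw [hone, one_mul]
  congr 1
  funext u
  show F (2 * π * u) = _
  simp only [hF, RCLike.inner_apply, conj_trivial, smul_eq_mul, h, g]
  rw [sub_eq_add_neg, Complex.exp_add, Complex.ofReal_exp]
  congr 2 <;> push_cast <;> ring

end Airy4

open FourierTransform Complex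

/-- `φ` is integrable and its Fourier transform is the quartic
Gaussian `exp(−λ⁴/4)`. -/
theorem airy4_fourier_transform :
    Integrable φ ∧
    ∀ l : ℝ, (∫ x : ℝ, φ x * Complex.exp (-Complex.I * l * x))
      = Complex.exp (-(l : ℂ) ^ 4 / 4) := by
  classical
  have hΦ_int : Integrable (𝓕⁻ Airy4.h) := by
    have : (𝓕⁻ Airy4.h) = fun x => 𝓕 Airy4.h (-x) :=
      funext fun x => Real.fourierInv_eq_fourier_neg Airy4.h x
    rw [this]
    exact Airy4.fourier_h_int.comp_neg
  have hcont_h : Continuous Airy4.h := by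
    have : Continuous Airy4.g := Airy4.contDiff_g.continuous
    exact Complex.continuous_ofReal.comp this
  have hinv : 𝓕 (𝓕⁻ Airy4.h) = Airy4.h :=
    hcont_h.fourier_fourierInv_eq Airy4.h_int Airy4.fourier_h_int
  constructor
  · rw [Airy4.phi_eq]; exact hΦ_int
  · intro l
    have hπ : ((π:ℝ) : ℂ) ≠ 0 := Complex.ofReal_ne_zero.2 Real.pi_ne_zero
    have step1 : (∫ x : ℝ, φ x * Complex.exp (-Complex.I * l * x))
        = 𝓕 (𝓕⁻ Airy4.h) (l / (2 * π)) := by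
      rw [Real.fourier_eq']
      congr 1
      funext x
      rw [Airy4.phi_eq]
      simp only [RCLike.inner_apply, conj_trivial, smul_eq_mul]
      rw [mul_comm]
      congr 1
      have hx : (-2 * π * (l / (2 * π) * x) : ℝ) = -(x * l) := by
        field_simp
      rw [hx]
      push_cast
      ring
    rw [step1, hinv]
    show ((Real.exp (-(4 * π ^ 4) * (l / (2*π)) ^ 4) : ℝ) : ℂ) = _
    rw [Complex.ofReal_exp]
    congr 1
    have : (-(4 * π ^ 4) * (l / (2*π)) ^ 4 : ℝ) = -(l^4) / 4 := by
      field_simp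
      ring
    rw [this]
    push_cast
    ring
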